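/- arXiv:2406.10582 — 3 statements merged into one kernel-verified Lean document; each statement's English description precedes it below -/
import Mathlib

section
/- Let r, ξ : [0,∞) → [0,∞) be nonnegative continuous functions and β > 0. If for all 0 ≤ s < t < ∞ we have r(t) − r(s) ≤ −β ∫_s^t r(u) du + ∫_s^t ξ(u) du, then for all t ≥ 0, r(t) ≤ r(0) + ∫_0^t e^{−β(t−u)} ξ(u) du. -/
open intervalIntegral Real

set_option maxHeartbeats 1000000 in
theorem gronwall_aux (f g : ℝ → ℝ) (β : ℝ) (hβ : 0 < β)
    (hf : Continuous f) (hg : Continuous g) (hf0 : 0 ≤ f 0)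
    (hineq : ∀ s t : ℝ, 0 ≤ s → s < t →
      f t - f s ≤ (-β) * (∫ u in s..t, f u) + ∫ u in s..t, g u) :
    ∀ t : ℝ, 0 ≤ t →
      f t ≤ f 0 + ∫ u in (0:ℝ)..t, Real.exp (-β * (t - u)) * g u := by
  intro t ht
  rcases eq_or_lt_of_le ht with rfl | ht
  · simp
  set G : ℝ → ℝ := fun s => ∫ u in (0:ℝ)..s, f u with hGdef
  set Xi : ℝ → ℝ := fun s => ∫ u in (0:ℝ)..s, g u with hXidef
  have hGderiv : ∀ s, HasDerivAt G (f s) s := fun s =>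
    integral_hasDerivAt_right (hf.intervalIntegrable 0 s)
      (hf.stronglyMeasurableAtFilter _ _) hf.continuousAt
  have hXideriv : ∀ s, HasDerivAt Xi (g s) s := fun s =>
    integral_hasDerivAt_right (hg.intervalIntegrable 0 s)
      (hg.stronglyMeasurableAtFilter _ _) hg.continuousAt
  have hGcont : Continuous G :=
    Differentiable.continuous (fun s => (hGderiv s).differentiableAt)
  have hXicont : Continuous Xi :=
    Differentiable.continuous (fun s => (hXideriv s).differentiableAt)
  set w : ℝ → ℝ := fun s => f s + β * G s - Xi s with hwdef
  have hce : Continuous fun u => Real.exp (β * u) :=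
    Real.continuous_exp.comp (continuous_const.mul continuous_id)
  have hwcont : Continuous w := (hf.add (continuous_const.mul hGcont)).sub hXicont
  have hG0 : G 0 = 0 := integral_same
  have hXi0 : Xi 0 = 0 := integral_same
  -- w is antitone on [0, ∞)
  have hw_anti : ∀ s u : ℝ, 0 ≤ s → s ≤ u → w u ≤ w s := by
    intro s u hs hsu
    rcases eq_or_lt_of_le hsu with rfl | hsu
    · exact le_rfl
    have hGsplit : G u - G s = ∫ x in s..u, f x := by
      rw [hGdef]
      simp only
      rw [← intervalIntegral.integral_add_adjacent_intervals
        (hf.intervalIntegrable 0 s) (hf.intervalIntegrable s u)]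
      ring
    have hXisplit : Xi u - Xi s = ∫ x in s..u, g x := by
      rw [hXidef]
      simp only
      rw [← intervalIntegral.integral_add_adjacent_intervals
        (hg.intervalIntegrable 0 s) (hg.intervalIntegrable s u)]
      ring
    have h := hineq s u hs hsu
    have : w u - w s ≤ 0 := by
      simp only [hwdef]
      have : f u - f s + β * (G u - G s) - (Xi u - Xi s) ≤ 0 := by
        rw [hGsplit, hXisplit]
        nlinarith [h]
      nlinarith [this]
    linarith
  -- FTC applied to exp(β s) * G s
  have hyderiv : ∀ s, HasDerivAt (fun u => Real.exp (β * u) * G u)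
      (Real.exp (β * s) * (w s + Xi s)) s := by
    intro s
    have h1 : HasDerivAt (fun u => Real.exp (β * u)) (β * Real.exp (β * s)) s := by
      have := (Real.hasDerivAt_exp (β * s)).comp s ((hasDerivAt_id s).const_mul β)
      exact this.congr_deriv (by ring)
    have := h1.mul (hGderiv s)
    refine this.congr_deriv ?_
    simp only [hwdef]
    ring
  have hyFTC : ∫ u in (0:ℝ)..t, Real.exp (β * u) * (w u + Xi u) =
      Real.exp (β * t) * G t := by
    have := intervalIntegral.integral_eq_sub_of_hasDerivAt
      (f := fun u => Real.exp (β * u) * G u)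
      (f' := fun u => Real.exp (β * u) * (w u + Xi u))
      (fun x _ => hyderiv x)
      (Continuous.intervalIntegrable (hce.mul (hwcont.add hXicont)) 0 t)
    rw [this]
    simp [hG0]
  -- FTC applied to exp(β s) * Xi s
  have hXideriv2 : ∀ s, HasDerivAt (fun u => Real.exp (β * u) * Xi u)
      (Real.exp (β * s) * (β * Xi s + g s)) s := by
    intro s
    have h1 : HasDerivAt (fun u => Real.exp (β * u)) (β * Real.exp (β * s)) s := by
      have := (Real.hasDerivAt_exp (β * s)).comp s ((hasDerivAt_id s).const_mul β)
      exact this.congr_deriv (by ring)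
    have := h1.mul (hXideriv s)
    refine this.congr_deriv ?_
    ring
  have hXiFTC : ∫ u in (0:ℝ)..t, Real.exp (β * u) * (β * Xi u + g u) =
      Real.exp (β * t) * Xi t := by
    have := intervalIntegral.integral_eq_sub_of_hasDerivAt
      (f := fun u => Real.exp (β * u) * Xi u)
      (f' := fun u => Real.exp (β * u) * (β * Xi u + g u))
      (fun x _ => hXideriv2 x)
      (Continuous.intervalIntegrable (hce.mul ((continuous_const.mul hXicont).add hg)) 0 t)
    rw [this]
    simp [hXi0]
  -- notation for the integrals
  set Iw : ℝ := ∫ u in (0:ℝ)..t, Real.exp (β * u) * w u with hIw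
  set IX : ℝ := ∫ u in (0:ℝ)..t, Real.exp (β * u) * Xi u with hIX
  set Ig : ℝ := ∫ u in (0:ℝ)..t, Real.exp (β * u) * g u with hIg
  have hsplit1 : Real.exp (β * t) * G t = Iw + IX := by
    rw [← hyFTC, hIw, hIX, ← intervalIntegral.integral_add
      (f := fun u => Real.exp (β * u) * w u) (g := fun u => Real.exp (β * u) * Xi u)
      (Continuous.intervalIntegrable (hce.mul hwcont) 0 t)
      (Continuous.intervalIntegrable (hce.mul hXicont) 0 t)]
    exact intervalIntegral.integral_congr fun u _ => by ring
  have hsplit2 : Real.exp (β * t) * Xi t = β * IX + Ig := by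
    rw [← hXiFTC, hIX, hIg, ← intervalIntegral.integral_const_mul, ← intervalIntegral.integral_add
      (f := fun u => β * (Real.exp (β * u) * Xi u)) (g := fun u => Real.exp (β * u) * g u)
      (Continuous.intervalIntegrable (continuous_const.mul (hce.mul hXicont)) 0 t)
      (Continuous.intervalIntegrable (hce.mul hg) 0 t)]
    exact intervalIntegral.integral_congr fun u _ => by ring
  -- the target integral equals exp(-β t) * Ig
  have htarget : ∫ u in (0:ℝ)..t, Real.exp (-β * (t - u)) * g u =
      Real.exp (-(β * t)) * Ig := by
    rw [hIg, ← intervalIntegral.integral_const_mul]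
    refine intervalIntegral.integral_congr fun u _ => ?_
    have h : Real.exp (-β * (t - u)) = Real.exp (-(β * t)) * Real.exp (β * u) := by
      rw [← Real.exp_add]; ring_nf
    simp only [h]; ring
  -- lower bound on Iw
  have hIwlow : w t * ((Real.exp (β * t) - 1) / β) ≤ Iw := by
    have hmono : ∀ x ∈ Set.Icc (0:ℝ) t,
        Real.exp (β * x) * w t ≤ Real.exp (β * x) * w x := by
      intro x hx
      exact mul_le_mul_of_nonneg_left (hw_anti x t hx.1 hx.2) (Real.exp_pos _).le
    have hexpint : ∫ u in (0:ℝ)..t, Real.exp (β * u) = (Real.exp (β * t) - 1) / β := by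
      have hd : ∀ x ∈ Set.uIcc (0:ℝ) t,
          HasDerivAt (fun u => Real.exp (β * u) / β) (Real.exp (β * x)) x := by
        intro x _
        have h1 : HasDerivAt (fun u => Real.exp (β * u)) (β * Real.exp (β * x)) x := by
          have := (Real.hasDerivAt_exp (β * x)).comp x ((hasDerivAt_id x).const_mul β)
          exact this.congr_deriv (by ring)
        have h2 := h1.div_const β
        refine h2.congr_deriv ?_
        field_simp
      rw [intervalIntegral.integral_eq_sub_of_hasDerivAt hd (hce.intervalIntegrable 0 t)]
      simp only [mul_zero, Real.exp_zero]
      ring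
    have hintexp : ∫ u in (0:ℝ)..t, Real.exp (β * u) * w t =
        w t * ((Real.exp (β * t) - 1) / β) := by
      rw [intervalIntegral.integral_mul_const, hexpint]
      ring
    calc w t * ((Real.exp (β * t) - 1) / β)
        = ∫ u in (0:ℝ)..t, Real.exp (β * u) * w t := hintexp.symm
      _ ≤ Iw := by
          rw [hIw]
          exact intervalIntegral.integral_mono_on ht.le
            ((hce.mul continuous_const).intervalIntegrable 0 t)
            ((hce.mul hwcont).intervalIntegrable 0 t) hmono
  -- key identity
  have hee : Real.exp (-(β * t)) * Real.exp (β * t) = 1 := by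
    rw [← Real.exp_add]; simp
  have hE : (0:ℝ) < Real.exp (-(β * t)) := Real.exp_pos _
  have hXpos : (0:ℝ) < Real.exp (β * t) := Real.exp_pos _
  have key : f t = w t - β * Real.exp (-(β * t)) * Iw + Real.exp (-(β * t)) * Ig := by
    have hGt : G t = Real.exp (-(β * t)) * (Iw + IX) := by
      rw [← hsplit1, ← mul_assoc, hee, one_mul]
    have hXit : Xi t = Real.exp (-(β * t)) * (β * IX + Ig) := by
      rw [← hsplit2, ← mul_assoc, hee, one_mul]
    have hft : f t = w t - β * G t + Xi t := by
      simp only [hwdef]; ring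
    rw [hft, hGt, hXit]; ring
  have h2 : β * Real.exp (-(β * t)) * (w t * ((Real.exp (β * t) - 1) / β)) ≤
      β * Real.exp (-(β * t)) * Iw :=
    mul_le_mul_of_nonneg_left hIwlow (by positivity)
  have h3 : β * Real.exp (-(β * t)) * (w t * ((Real.exp (β * t) - 1) / β)) =
      w t * (Real.exp (-(β * t)) * Real.exp (β * t)) - w t * Real.exp (-(β * t)) := by
    field_simp
  rw [hee] at h3
  have hwle : w t * Real.exp (-(β * t)) ≤ f 0 := by
    rcases le_or_gt (w t) 0 with h | h
    · nlinarith
    · have h1 : w t ≤ w 0 := hw_anti 0 t le_rfl ht.le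
      have hw0 : w 0 = f 0 := by simp [hwdef, hG0, hXi0]
      have hle1 : Real.exp (-(β * t)) ≤ 1 := by
        rw [Real.exp_le_one_iff]
        nlinarith
      nlinarith
  have h4 : w t - w t * Real.exp (-(β * t)) ≤ β * Real.exp (-(β * t)) * Iw := by
    rw [h3] at h2
    linarith
  rw [htarget]
  linarith [key, h4, hwle]

/-- Gronwall-type comparison lemma (Lemma 2.1): if a nonnegative continuous
function `r` satisfies the integral dissipativity inequality with rate `β`
and forcing `ξ`, then `r t ≤ r 0 + ∫_0^t e^{-β (t-u)} ξ u du`. -/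
theorem gronwall_dissipativity
    (r ξ : ℝ → ℝ) (β : ℝ) (hβ : 0 < β)
    (hr_cont : ContinuousOn r (Set.Ici (0:ℝ)))
    (hξ_cont : ContinuousOn ξ (Set.Ici (0:ℝ)))
    (hr_nonneg : ∀ t, 0 ≤ t → 0 ≤ r t)
    (hξ_nonneg : ∀ t, 0 ≤ t → 0 ≤ ξ t)
    (hineq : ∀ s t : ℝ, 0 ≤ s → s < t →
      r t - r s ≤ (-β) * (∫ u in s..t, r u) + ∫ u in s..t, ξ u) :
    ∀ t : ℝ, 0 ≤ t →
      r t ≤ r 0 + ∫ u in (0:ℝ)..t, Real.exp (-β * (t - u)) * ξ u := by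
  set f : ℝ → ℝ := fun u => r (max u 0) with hfdef
  set g : ℝ → ℝ := fun u => ξ (max u 0) with hgdef
  have hmax : Continuous fun u : ℝ => max u 0 := continuous_id.max continuous_const
  have hf : Continuous f := hr_cont.comp_continuous hmax fun x => le_max_right x 0
  have hg : Continuous g := hξ_cont.comp_continuous hmax fun x => le_max_right x 0
  have hfeq : ∀ u : ℝ, 0 ≤ u → f u = r u := fun u hu => by
    simp [hfdef, max_eq_left hu]
  have hgeq : ∀ u : ℝ, 0 ≤ u → g u = ξ u := fun u hu => by
    simp [hgdef, max_eq_left hu]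
  have hintf : ∀ s t : ℝ, 0 ≤ s → s ≤ t →
      (∫ u in s..t, f u) = ∫ u in s..t, r u := by
    intro s t hs hst
    refine intervalIntegral.integral_congr fun u hu => ?_
    rw [Set.uIcc_of_le hst] at hu
    exact hfeq u (hs.trans hu.1)
  have hintg : ∀ s t : ℝ, 0 ≤ s → s ≤ t →
      (∫ u in s..t, g u) = ∫ u in s..t, ξ u := by
    intro s t hs hst
    refine intervalIntegral.integral_congr fun u hu => ?_
    rw [Set.uIcc_of_le hst] at hu
    exact hgeq u (hs.trans hu.1)
  have hineq' : ∀ s t : ℝ, 0 ≤ s → s < t →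
      f t - f s ≤ (-β) * (∫ u in s..t, f u) + ∫ u in s..t, g u := by
    intro s t hs hst
    rw [hfeq t (hs.trans hst.le), hfeq s hs, hintf s t hs hst.le, hintg s t hs hst.le]
    exact hineq s t hs hst
  have hf0 : 0 ≤ f 0 := by rw [hfeq 0 le_rfl]; exact hr_nonneg 0 le_rfl
  intro t ht
  have := gronwall_aux f g β hβ hf hg hf0 hineq' t ht
  rw [hfeq t ht, hfeq 0 le_rfl] at this
  refine this.trans (le_of_eq ?_)
  congr 1
  refine intervalIntegral.integral_congr fun u hu => ?_
  rw [Set.uIcc_of_le ht] at hu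
  rw [hgeq u hu.1]
end

section
/- Let μ, ν > 0, h > 0 with 1 − μh > 0, and let p ≥ 1 be a real number. Suppose a nonnegative sequence (Y_k)_{k∈ℕ} of real numbers satisfies Y_k^{2p} ≤ (1 − μh) Y_{k−1}^{2p} + ν h Y_{k−1}^{2p−2} for all k ≥ 1. Then there exists a constant C depending only on p, μ, ν such that Y_k^{2p} ≤ C (1 + Y_0^{2p}) for all k ≥ 0. -/
open Real

/-- Lemma 3.1: if a nonnegative sequence satisfies
`Y_k^{2p} ≤ (1 - μh) Y_{k-1}^{2p} + νh Y_{k-1}^{2p-2}` then its `2p`-th powers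
are bounded by `C (1 + Y_0^{2p})` with `C` depending only on `p, μ, ν`
(uniformly in `h`, the sequence, and `k`). -/
theorem moment_bound_recursion
    (p μ ν : ℝ) (hp : 1 ≤ p) (hμ : 0 < μ) (hν : 0 < ν) :
    ∃ C : ℝ, 0 < C ∧
      ∀ (h : ℝ) (Y : ℕ → ℝ), 0 < h → 0 < 1 - μ * h →
        (∀ k, 0 ≤ Y k) →
        (∀ k : ℕ, 1 ≤ k →
          Y k ^ (2 * p) ≤ (1 - μ * h) * Y (k - 1) ^ (2 * p)
            + ν * h * Y (k - 1) ^ (2 * p - 2)) →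
        ∀ k : ℕ, Y k ^ (2 * p) ≤ C * (1 + Y 0 ^ (2 * p)) := by
  have hp0 : 0 < p := lt_of_lt_of_le one_pos hp
  set θ : ℝ := 1 - p⁻¹ with hθdef
  have hpinv1 : p⁻¹ ≤ 1 := by
    rw [inv_le_one_iff₀]; right; exact hp
  have hpinv0 : 0 < p⁻¹ := inv_pos.2 hp0
  have hθ0 : 0 ≤ θ := by simp only [hθdef]; linarith
  have hθ1 : θ < 1 := by simp only [hθdef]; linarith
  set ε : ℝ := μ / (2 * ν) with hεdef
  have hε : 0 < ε := div_pos hμ (by positivity)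
  set M : ℝ := max 1 (ε ^ (-(1 - θ)⁻¹)) with hMdef
  have hM1 : 1 ≤ M := le_max_left _ _
  -- Young-type inequality
  have key : ∀ x : ℝ, 0 ≤ x → x ^ θ ≤ ε * x + M := by
    intro x hx
    rcases le_or_gt x M with hxM | hxM
    · have h1 : x ^ θ ≤ M ^ θ := Real.rpow_le_rpow hx hxM hθ0
      have h2 : M ^ θ ≤ M ^ (1 : ℝ) :=
        Real.rpow_le_rpow_of_exponent_le hM1 (le_of_lt hθ1)
      rw [Real.rpow_one] at h2
      have h3 : 0 ≤ ε * x := mul_nonneg hε.le hx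
      linarith
    · have hc : ε ^ (-(1 - θ)⁻¹) ≤ x := le_trans (le_max_right _ _) hxM.le
      have hcpos : (0 : ℝ) < ε ^ (-(1 - θ)⁻¹) := Real.rpow_pos_of_pos hε _
      have hx0 : 0 < x := lt_of_lt_of_le hcpos hc
      have h1θ : 0 < 1 - θ := by linarith
      have h1 : (ε ^ (-(1 - θ)⁻¹)) ^ (1 - θ) ≤ x ^ (1 - θ) :=
        Real.rpow_le_rpow hcpos.le hc h1θ.le
      have h2 : (ε ^ (-(1 - θ)⁻¹)) ^ (1 - θ) = ε⁻¹ := by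
        rw [← Real.rpow_mul hε.le]
        rw [show -(1 - θ)⁻¹ * (1 - θ) = -1 by field_simp]
        exact Real.rpow_neg_one ε
      rw [h2] at h1
      have hεx : 1 ≤ ε * x ^ (1 - θ) := by
        calc (1 : ℝ) = ε * ε⁻¹ := (mul_inv_cancel₀ hε.ne').symm
          _ ≤ ε * x ^ (1 - θ) := mul_le_mul_of_nonneg_left h1 hε.le
      have hxθ : 0 ≤ x ^ θ := Real.rpow_nonneg hx θ
      calc x ^ θ = x ^ θ * 1 := (mul_one _).symm
        _ ≤ x ^ θ * (ε * x ^ (1 - θ)) := mul_le_mul_of_nonneg_left hεx hxθ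
        _ = ε * (x ^ θ * x ^ (1 - θ)) := by ring
        _ = ε * x := by
            rw [← Real.rpow_add hx0]
            norm_num
        _ ≤ ε * x + M := by linarith
  set B : ℝ := 2 * ν * M / μ with hBdef
  have hB0 : 0 < B := by positivity
  refine ⟨max 1 B, lt_of_lt_of_le one_pos (le_max_left _ _), ?_⟩
  intro h Y hh h1μ hYpos hrec
  have hexp : ∀ k : ℕ, Y k ^ (2 * p - 2) = (Y k ^ (2 * p)) ^ θ := by
    intro k
    rw [← Real.rpow_mul (hYpos k)]
    congr 1
    field_simp [hθdef]
    rw [hθdef]; field_simp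
  have hbound : ∀ k : ℕ, Y k ^ (2 * p) ≤ Y 0 ^ (2 * p) + B := by
    intro k
    induction k with
    | zero => linarith
    | succ n ih =>
        have hr := hrec (n + 1) (by omega)
        simp only [Nat.add_sub_cancel] at hr
        have hk := key (Y n ^ (2 * p)) (Real.rpow_nonneg (hYpos n) _)
        rw [hexp n] at hr
        have han : 0 ≤ Y n ^ (2 * p) := Real.rpow_nonneg (hYpos n) _
        have hνε : ν * h * (ε * Y n ^ (2 * p)) = μ * h / 2 * Y n ^ (2 * p) := by
          rw [hεdef]; field_simp
        have hνhM : ν * h * M = μ * h / 2 * B := by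
          rw [hBdef]; field_simp
        have hstep : ν * h * (Y n ^ (2 * p)) ^ θ ≤ ν * h * (ε * Y n ^ (2 * p) + M) :=
          mul_le_mul_of_nonneg_left hk (mul_nonneg hν.le hh.le)
        have hmul : (1 - μ * h / 2) * (Y n ^ (2 * p)) ≤ (1 - μ * h / 2) * (Y 0 ^ (2 * p) + B) :=
          mul_le_mul_of_nonneg_left ih (by nlinarith)
        have hY0 : 0 ≤ Y 0 ^ (2 * p) := Real.rpow_nonneg (hYpos 0) _
        have hμh0 : 0 ≤ μ * h * Y 0 ^ (2 * p) := mul_nonneg (mul_nonneg hμ.le hh.le) hY0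
        nlinarith [hr, hstep, hmul]
  intro k
  have := hbound k
  have hY0 : 0 ≤ Y 0 ^ (2 * p) := Real.rpow_nonneg (hYpos 0) _
  have hC1 : (1 : ℝ) ≤ max 1 B := le_max_left _ _
  have hCB : B ≤ max 1 B := le_max_right _ _
  nlinarith
end

section
/- Under contractive monotonicity (with parameter p* and rate α₁), global Lipschitz diffusion ‖g(x) − g(y)‖² ≤ β₁|x−y|², and polynomial growth Lipschitz drift with exponent κ, the one-step backward Euler approximation Z(t, x; t+h) = x + ∫_t^{t+h} f(Z(t, x; t+h)) ds + g(x)(W(t+h) − W(t)) satisfies, for all 1 ≤ p ≤ ⌊p*⌋/κ and h ∈ (0,1], E[|Z(t, x; t+h) − x|^{2p}] ≤ C₇ (1 + |x|^{2κp}) h^p with C₇ independent of t, h. -/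
open MeasureTheory ProbabilityTheory Real Finset

/-- Frobenius (trace) norm of a real matrix. -/
noncomputable def frobNorm {d m : ℕ} (M : Matrix (Fin d) (Fin m) ℝ) : ℝ :=
  Real.sqrt (∑ i, ∑ j, (M i j) ^ 2)

/-- Matrix acting on a Euclidean vector. -/
noncomputable def matVec {d m : ℕ} (M : Matrix (Fin d) (Fin m) ℝ)
    (v : EuclideanSpace ℝ (Fin m)) : EuclideanSpace ℝ (Fin d) :=
  (WithLp.equiv 2 (Fin d → ℝ)).symm (M.mulVec fun j => v j)

/-- Generator of the diffusion with drift `f` and diffusion matrix `g`. -/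
noncomputable def generator {d m : ℕ}
    (f : EuclideanSpace ℝ (Fin d) → EuclideanSpace ℝ (Fin d))
    (g : EuclideanSpace ℝ (Fin d) → Matrix (Fin d) (Fin m) ℝ)
    (φ : EuclideanSpace ℝ (Fin d) → ℝ) (x : EuclideanSpace ℝ (Fin d)) : ℝ :=
  fderiv ℝ φ x (f x) +
    (1 / 2) * ∑ i, ∑ j, (g x * (g x).transpose) i j *
      fderiv ℝ (fun y => fderiv ℝ φ y (EuclideanSpace.single j 1)) x
        (EuclideanSpace.single i 1)

/-- Martingale-problem formulation of "`X` solves `dX = f(X)dt + g(X)dW`":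
`X` is adapted with continuous paths and for every `C²` test function `φ` with
bounded derivatives, `φ(X_t) - φ(X_0) - ∫_0^t (Lφ)(X_s) ds` is a martingale. -/
def IsSDESolution {Ω : Type*} {mΩ : MeasurableSpace Ω} (μ : Measure Ω)
    (ℱ : Filtration ℝ mΩ) {d m : ℕ}
    (f : EuclideanSpace ℝ (Fin d) → EuclideanSpace ℝ (Fin d))
    (g : EuclideanSpace ℝ (Fin d) → Matrix (Fin d) (Fin m) ℝ)
    (X : ℝ → Ω → EuclideanSpace ℝ (Fin d)) : Prop :=
  Adapted ℱ X ∧ (∀ ω, Continuous fun t => X t ω) ∧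
    ∀ φ : EuclideanSpace ℝ (Fin d) → ℝ, ContDiff ℝ 2 φ →
      (∀ n : ℕ, n ≤ 2 → ∃ C : ℝ, ∀ x, ‖iteratedFDeriv ℝ n φ x‖ ≤ C) →
      Martingale
        (fun t ω => φ (X t ω) - φ (X 0 ω)
          - ∫ s in (0:ℝ)..t, generator f g φ (X s ω)) ℱ μ

/-- An `m`-dimensional Brownian motion: starts at `0`, continuous paths,
Gaussian coordinate increments, independent increments. -/
def IsBrownianMotion {Ω : Type*} {mΩ : MeasurableSpace Ω} (μ : Measure Ω)
    {m : ℕ} (W : ℝ → Ω → EuclideanSpace ℝ (Fin m)) : Prop :=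
  (∀ ω, W 0 ω = 0) ∧ (∀ ω, Continuous fun t => W t ω) ∧
    (∀ s t : ℝ, 0 ≤ s → s ≤ t → ∀ i : Fin m,
      Measure.map (fun ω => W t ω i - W s ω i) μ
        = ProbabilityTheory.gaussianReal 0 (t - s).toNNReal) ∧
    (∀ (n : ℕ) (t : ℕ → ℝ), Monotone t → 0 ≤ t 0 →
      ProbabilityTheory.iIndepFun
        (fun (k : Fin n × Fin m) ω => W (t (k.1 + 1)) ω k.2 - W (t k.1) ω k.2) μ)

open scoped NNReal

section Helpers

lemma frobNorm_eq_norm {d m : ℕ} (M : Matrix (Fin d) (Fin m) ℝ) :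
    frobNorm M = ‖((EuclideanSpace.equiv (Fin d × Fin m) ℝ).symm (fun p => M p.1 p.2) : EuclideanSpace ℝ (Fin d × Fin m))‖ := by
  rw [frobNorm, EuclideanSpace.norm_eq]
  congr 1
  rw [Fintype.sum_prod_type]
  congr 1 with i
  congr 1 with j
  simp [EuclideanSpace.equiv, sq_abs]

lemma frobNorm_nonneg {d m : ℕ} (M : Matrix (Fin d) (Fin m) ℝ) : 0 ≤ frobNorm M :=
  Real.sqrt_nonneg _

lemma frobNorm_triangle {d m : ℕ} (A B : Matrix (Fin d) (Fin m) ℝ) :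
    frobNorm (A + B) ≤ frobNorm A + frobNorm B := by
  simp only [frobNorm_eq_norm]
  have : ((EuclideanSpace.equiv (Fin d × Fin m) ℝ).symm (fun p => (A + B) p.1 p.2) : EuclideanSpace ℝ (Fin d × Fin m))
      = (EuclideanSpace.equiv (Fin d × Fin m) ℝ).symm (fun p => A p.1 p.2)
        + (EuclideanSpace.equiv (Fin d × Fin m) ℝ).symm (fun p => B p.1 p.2) := by
    rw [← map_add]; rfl
  rw [this]
  exact norm_add_le _ _

lemma matVec_norm_le {d m : ℕ} (M : Matrix (Fin d) (Fin m) ℝ)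
    (v : EuclideanSpace ℝ (Fin m)) : ‖matVec M v‖ ≤ frobNorm M * ‖v‖ := by
  have h1 : ‖matVec M v‖ = Real.sqrt (∑ i, (∑ j, M i j * v j) ^ 2) := by
    rw [matVec, EuclideanSpace.norm_eq]
    congr 1
    apply Finset.sum_congr rfl
    intro i _
    simp [Matrix.mulVec, dotProduct, sq_abs]
  have h2 : ‖v‖ = Real.sqrt (∑ j, (v j) ^ 2) := by
    rw [EuclideanSpace.norm_eq]
    congr 1
    apply Finset.sum_congr rfl
    intro j _
    simp [sq_abs]
  rw [h1, h2, frobNorm, ← Real.sqrt_mul (by positivity)]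
  apply Real.sqrt_le_sqrt
  rw [Finset.sum_mul]
  apply Finset.sum_le_sum
  intro i _
  calc (∑ j, M i j * v j) ^ 2 ≤ (∑ j, (M i j)^2) * (∑ j, (v j)^2) :=
        Finset.sum_mul_sq_le_sq_mul_sq _ _ _
    _ = _ := rfl

end Helpers

section Helpers2

-- (a+b)^q ≤ 2^q (a^q + b^q)
lemma rpow_add_le {a b q : ℝ} (ha : 0 ≤ a) (hb : 0 ≤ b) (hq : 0 ≤ q) :
    (a + b) ^ q ≤ 2 ^ q * (a ^ q + b ^ q) := by
  have hmax : a + b ≤ 2 * max a b := by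
    rcases le_total a b with h | h
    · simp [max_eq_right h]; linarith
    · simp [max_eq_left h]; linarith
  calc (a + b) ^ q ≤ (2 * max a b) ^ q :=
        Real.rpow_le_rpow (by linarith) hmax hq
    _ = 2 ^ q * (max a b) ^ q := Real.mul_rpow (by norm_num) (le_max_of_le_left ha)
    _ ≤ 2 ^ q * (a ^ q + b ^ q) := by
        gcongr 2 ^ q * ?_
        rcases le_total a b with h | h
        · rw [max_eq_right h]
          exact le_add_of_nonneg_left (Real.rpow_nonneg ha q)
        · rw [max_eq_left h]
          exact le_add_of_nonneg_right (Real.rpow_nonneg hb q)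

-- a^s ≤ 1 + a^r for 0 ≤ s ≤ r
lemma rpow_le_one_add_rpow {a s r : ℝ} (ha : 0 ≤ a) (hs : 0 ≤ s) (hsr : s ≤ r) :
    a ^ s ≤ 1 + a ^ r := by
  rcases le_total a 1 with h | h
  · have := Real.rpow_le_one ha h hs
    have h2 : 0 ≤ a ^ r := Real.rpow_nonneg ha r
    linarith
  · have := Real.rpow_le_rpow_of_exponent_le h hsr
    have h2 : (0:ℝ) ≤ 1 := zero_le_one
    linarith

-- split trick:  a^p ≤ h^p + h^(p - n) * a^n  for a ≥ 0, 0 < h, p ≤ n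
lemma rpow_le_split {a h p : ℝ} {n : ℕ} (ha : 0 ≤ a) (hh : 0 < h) (hp : 0 ≤ p)
    (hpn : p ≤ (n:ℝ)) : a ^ p ≤ h ^ p + h ^ (p - (n:ℝ)) * a ^ n := by
  have han : (0:ℝ) ≤ h ^ (p - (n:ℝ)) * a ^ n := by positivity
  rcases le_total a h with hle | hgt
  · have : a ^ p ≤ h ^ p := Real.rpow_le_rpow ha hle hp
    linarith
  · -- h ≤ a, so  a^p = a^(p-n) * a^n ≤ h^(p-n) * a^n
    have hapos : 0 < a := lt_of_lt_of_le hh hgt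
    have h1 : a ^ p = a ^ (p - (n:ℝ)) * a ^ (n:ℝ) := by
      rw [← Real.rpow_add hapos]; ring_nf
    have h2 : a ^ (p - (n:ℝ)) ≤ h ^ (p - (n:ℝ)) :=
      Real.rpow_le_rpow_of_nonpos hh hgt (by linarith)
    have h3 : (0:ℝ) < a ^ (n:ℝ) := Real.rpow_pos_of_pos hapos _
    have h4 : a ^ p ≤ h ^ (p - (n:ℝ)) * a ^ (n:ℝ) := by
      rw [h1]; exact mul_le_mul_of_nonneg_right h2 (le_of_lt h3)
    have h5 : a ^ ((n:ℕ):ℝ) = a ^ n := Real.rpow_natCast a n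
    have h6 : (0:ℝ) ≤ h ^ p := le_of_lt (Real.rpow_pos_of_pos hh p)
    rw [h5] at h4
    linarith

-- power of sum bound
lemma sum_pow_le {ι : Type*} [Fintype ι] (f : ι → ℝ) (hf : ∀ i, 0 ≤ f i) (n : ℕ) (hn : 1 ≤ n) :
    (∑ i, f i) ^ n ≤ (Fintype.card ι : ℝ) ^ (n - 1) * ∑ i, (f i) ^ n := by
  rcases Nat.eq_zero_or_pos (Fintype.card ι) with hc | hc
  · have : (Finset.univ : Finset ι) = ∅ := by
      rwa [← Finset.card_eq_zero, Finset.card_univ]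
    simp [this, zero_pow (by omega : n ≠ 0)]
  · obtain ⟨k, rfl⟩ : ∃ k, n = k + 1 := ⟨n - 1, by omega⟩
    have h := pow_sum_le_card_mul_sum_pow (f := f) (s := Finset.univ)
      (fun i _ => hf i) (n := k)
    rw [Finset.card_univ] at h
    simpa [Nat.add_sub_cancel] using h

lemma integrable_pow_gaussian_std (n : ℕ) :
    Integrable (fun y : ℝ => y ^ (2 * n)) (gaussianReal 0 1) := by
  rw [gaussianReal_of_var_ne_zero _ one_ne_zero]
  rw [integrable_withDensity_iff (measurable_gaussianPDF 0 1)
    (ae_of_all _ fun x => ENNReal.ofReal_lt_top)]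
  have key : Integrable (fun x : ℝ => x ^ (((2 * n : ℕ)) : ℝ) * Real.exp (-(1/2) * x ^ 2)) :=
    integrable_rpow_mul_exp_neg_mul_sq (b := 1/2) (s := ((2*n:ℕ):ℝ)) (by norm_num)
      ((by norm_num : (-1:ℝ) < 0).trans_le (by positivity))
  have key2 : Integrable (fun x : ℝ => x ^ (2 * n) * Real.exp (-(1/2) * x ^ 2)) := by
    refine key.congr ?_
    filter_upwards with x
    rw [Real.rpow_natCast]
  have key3 := key2.mul_const ((Real.sqrt (2 * Real.pi))⁻¹)
  refine key3.congr ?_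
  filter_upwards with x
  rw [gaussianPDF, ENNReal.toReal_ofReal (gaussianPDFReal_nonneg 0 1 x), gaussianPDFReal]
  push_cast
  ring_nf

lemma gaussianReal_eq_map (v : ℝ≥0) :
    gaussianReal 0 v
      = Measure.map (fun y => Real.sqrt v * y) (gaussianReal 0 1) := by
  rw [gaussianReal_map_const_mul]
  congr 1
  · ring
  · ext
    simp [Real.sq_sqrt (v.coe_nonneg)]

lemma integrable_pow_gaussian (n : ℕ) (v : ℝ≥0) :
    Integrable (fun y : ℝ => y ^ (2 * n)) (gaussianReal 0 v) := by
  rw [gaussianReal_eq_map]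
  rw [integrable_map_measure
    (by fun_prop) (by fun_prop)]
  have := (integrable_pow_gaussian_std n).const_mul ((Real.sqrt v) ^ (2 * n))
  refine this.congr ?_
  filter_upwards with x
  simp [Function.comp, mul_pow]

lemma integral_pow_gaussian (n : ℕ) (v : ℝ≥0) :
    ∫ y, y ^ (2 * n) ∂(gaussianReal 0 v)
      = (v:ℝ) ^ n * ∫ y, y ^ (2 * n) ∂(gaussianReal 0 1) := by
  rw [gaussianReal_eq_map, integral_map (by fun_prop) (by fun_prop)]
  rw [← integral_const_mul]
  congr 1 with y
  rw [mul_pow, pow_mul, Real.sq_sqrt (v.coe_nonneg)]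


end Helpers2

set_option maxHeartbeats 2000000 in
/-- Lemma 3.3: one-step increment bound for the implicit (backward) Euler
approximation `Z = x + h f(Z) + g(x)(W(t+h) - W(t))`. -/
theorem backward_euler_one_step_increment_bound
    {Ω : Type*} {mΩ : MeasurableSpace Ω} (μ : Measure Ω) [IsProbabilityMeasure μ]
    {d m : ℕ}
    (f : EuclideanSpace ℝ (Fin d) → EuclideanSpace ℝ (Fin d))
    (g : EuclideanSpace ℝ (Fin d) → Matrix (Fin d) (Fin m) ℝ)
    (W : ℝ → Ω → EuclideanSpace ℝ (Fin m))
    (pstar α₁ c₁ κ β₁ : ℝ) (hpstar : 1 ≤ pstar) (hα₁ : 0 < α₁)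
    (hc₁ : 0 < c₁) (hκ : 1 ≤ κ) (hβ₁ : 0 < β₁)
    (hmono : ∀ x y : EuclideanSpace ℝ (Fin d),
      inner ℝ (x - y) (f x - f y) + ((2 * pstar - 1) / 2) * frobNorm (g x - g y) ^ 2
        ≤ -α₁ * ‖x - y‖ ^ 2)
    (hlip : ∀ x y : EuclideanSpace ℝ (Fin d),
      ‖f x - f y‖ ^ 2 ≤ c₁ * (1 + ‖x‖ ^ (2 * κ - 2) + ‖y‖ ^ (2 * κ - 2)) * ‖x - y‖ ^ 2)
    (hglip : ∀ x y : EuclideanSpace ℝ (Fin d),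
      frobNorm (g x - g y) ^ 2 ≤ β₁ * ‖x - y‖ ^ 2)
    (hW : IsBrownianMotion μ W) :
    ∀ p : ℝ, 1 ≤ p → p ≤ (⌊pstar⌋ : ℝ) / κ →
      ∃ C₇ : ℝ, 0 < C₇ ∧
        ∀ (t h : ℝ), 0 ≤ t → 0 < h → h ≤ 1 →
          ∀ (x : EuclideanSpace ℝ (Fin d)) (Z : Ω → EuclideanSpace ℝ (Fin d)),
            (∀ ω, Z ω = x + h • f (Z ω) + matVec (g x) (W (t + h) ω - W t ω)) →
            (∫ ω, ‖Z ω - x‖ ^ (2 * p) ∂μ)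
              ≤ C₇ * (1 + ‖x‖ ^ (2 * κ * p)) * h ^ p := by

  intro p hp1 _
  -- setup
  set n : ℕ := ⌈p⌉₊ with hn_def
  have hp0 : (0:ℝ) < p := by linarith
  have hn1 : 1 ≤ n := Nat.one_le_ceil_iff.mpr hp0
  have hpn : p ≤ (n:ℝ) := Nat.le_ceil p
  set M₁ : ℝ := ∫ y, y ^ (2 * n) ∂(gaussianReal 0 1) with hM₁_def
  have hM₁ : 0 ≤ M₁ := integral_nonneg fun y => (even_two_mul n).pow_nonneg y
  set K₁ : ℝ := 6 * c₁ + 2 * ‖f 0‖ ^ 2 + 1 with hK₁_def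
  set K₂ : ℝ := 2 * β₁ + 2 * (frobNorm (g 0)) ^ 2 + 1 with hK₂_def
  have hK₁ : (0:ℝ) < K₁ := by rw [hK₁_def]; positivity
  have hK₂ : (0:ℝ) < K₂ := by rw [hK₂_def]; positivity
  clear_value n M₁ K₁ K₂
  refine ⟨(2:ℝ) ^ (2*p) * (2:ℝ) ^ p * (K₁ ^ p + K₂ ^ p * (1 + (m:ℝ) ^ n * M₁)), ?_, ?_⟩
  · have h1 : (0:ℝ) < K₁ ^ p := Real.rpow_pos_of_pos hK₁ p
    have h2 : (0:ℝ) ≤ K₂ ^ p := (Real.rpow_pos_of_pos hK₂ p).le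
    have h3 : (0:ℝ) ≤ (m:ℝ) ^ n * M₁ := by positivity
    have h4 : (0:ℝ) < (2:ℝ) ^ (2*p) := Real.rpow_pos_of_pos two_pos _
    have h5 : (0:ℝ) < (2:ℝ) ^ p := Real.rpow_pos_of_pos two_pos _
    have h7 : (0:ℝ) < K₁ ^ p + K₂ ^ p * (1 + (m:ℝ) ^ n * M₁) := by nlinarith
    exact mul_pos (mul_pos h4 h5) h7
  intro t h ht hh hh1 x Z hZ
  set R : ℝ := ‖x‖ with hR_def
  have hR0 : 0 ≤ R := hR_def ▸ norm_nonneg x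
  set F : ℝ := ‖f x‖ with hF_def
  set G : ℝ := frobNorm (g x) with hG_def
  have hF0 : 0 ≤ F := hF_def ▸ norm_nonneg _
  have hG0 : 0 ≤ G := hG_def ▸ frobNorm_nonneg _
  clear_value R F G
  -- npow-to-rpow conversion for R^2
  have hsq_rpow : ∀ a : ℝ, 0 ≤ a → a ^ (2:ℕ) = a ^ ((2:ℝ)) := by
    intro a _; rw [show ((2:ℝ)) = ((2:ℕ):ℝ) by norm_num, Real.rpow_natCast]
  have hRκ0 : 0 ≤ R ^ (2*κ) := Real.rpow_nonneg hR0 _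
  have hR2_le : R ^ (2:ℕ) ≤ 1 + R ^ (2*κ) := by
    rw [hsq_rpow R hR0]
    exact rpow_le_one_add_rpow hR0 (by norm_num) (by linarith)
  have hRsplit : R ^ (2*κ-2) * R ^ (2:ℕ) = R ^ (2*κ) := by
    rw [hsq_rpow R hR0, ← Real.rpow_add' hR0 (by intro hc; nlinarith)]
    norm_num
  -- bound on F^2
  have hF2 : F ^ 2 ≤ K₁ * (1 + R ^ (2*κ)) := by
    have hl := hlip x 0
    simp only [sub_zero, norm_zero] at hl
    rw [← hR_def] at hl
    have h0r : (0:ℝ) ^ (2*κ-2) ≤ 1 := Real.zero_rpow_le_one _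
    have htri : F ≤ ‖f x - f 0‖ + ‖f 0‖ := by
      calc F = ‖(f x - f 0) + f 0‖ := by rw [sub_add_cancel, hF_def]
        _ ≤ ‖f x - f 0‖ + ‖f 0‖ := norm_add_le _ _
    have hRκ2 : 0 ≤ R ^ (2*κ-2) := Real.rpow_nonneg hR0 _
    have e1 : c₁ * (1 + R ^ (2*κ-2) + (0:ℝ) ^ (2*κ-2)) * R ^ 2
        ≤ c₁ * (2 + R ^ (2*κ-2)) * R ^ 2 := by
      apply mul_le_mul_of_nonneg_right _ (sq_nonneg R)
      apply mul_le_mul_of_nonneg_left _ hc₁.le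
      linarith
    have e2 : c₁ * (2 + R ^ (2*κ-2)) * R ^ 2 = 2*c₁*R^2 + c₁ * R^(2*κ) := by
      rw [← hRsplit]; ring
    have e3 : ‖f x - f 0‖^2 ≤ 2*c₁*R^2 + c₁*R^(2*κ) := by
      rw [← e2]; exact hl.trans e1
    have e4 : 2*c₁*R^2 ≤ 2*c₁*(1 + R^(2*κ)) := by nlinarith
    have e5 : F^2 ≤ 2*‖f x - f 0‖^2 + 2*‖f 0‖^2 := by
      nlinarith [sq_nonneg (‖f x - f 0‖ - ‖f 0‖), norm_nonneg (f x - f 0), norm_nonneg (f 0)]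
    nlinarith
  -- bound on G^2
  have hG2 : G ^ 2 ≤ K₂ * (1 + R ^ (2*κ)) := by
    have hl := hglip x 0
    simp only [sub_zero, norm_zero] at hl
    rw [← hR_def] at hl
    have htri : G ≤ frobNorm (g x - g 0) + frobNorm (g 0) := by
      calc G = frobNorm ((g x - g 0) + g 0) := by rw [sub_add_cancel, hG_def]
        _ ≤ _ := frobNorm_triangle _ _
    have e5 : G^2 ≤ 2*frobNorm (g x - g 0)^2 + 2*frobNorm (g 0)^2 := by
      nlinarith [sq_nonneg (frobNorm (g x - g 0) - frobNorm (g 0)),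
        frobNorm_nonneg (g x - g 0), frobNorm_nonneg (g 0)]
    nlinarith [sq_nonneg R, hR2_le, hβ₁.le, mul_le_mul_of_nonneg_left hR2_le (by linarith : (0:ℝ) ≤ 2*β₁)]
  -- pathwise bound
  set ΔW : Ω → EuclideanSpace ℝ (Fin m) := fun ω => W (t+h) ω - W t ω with hΔW_def
  set N : Ω → ℝ := fun ω => ‖ΔW ω‖ with hN_def
  have hN0 : ∀ ω, 0 ≤ N ω := fun ω => norm_nonneg _
  have hpath : ∀ ω, ‖Z ω - x‖ ≤ h * F + G * N ω := by
    intro ω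
    set u : EuclideanSpace ℝ (Fin d) := Z ω - x with hu_def
    have hu : u = h • f (Z ω) + matVec (g x) (W (t+h) ω - W t ω) := by
      rw [hu_def]
      conv_lhs => rw [hZ ω]
      abel
    set v : EuclideanSpace ℝ (Fin d) := matVec (g x) (W (t+h) ω - W t ω) with hv_def
    have hvle : ‖v‖ ≤ G * N ω := by
      rw [hG_def, hN_def]; exact matVec_norm_le _ _
    have hinner : (inner ℝ u u : ℝ) = h * inner ℝ u (f (Z ω)) + inner ℝ u v := by
      nth_rewrite 2 [hu]
      rw [inner_add_right, real_inner_smul_right]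
    have hm := hmono (Z ω) x
    have hfr : 0 ≤ ((2 * pstar - 1) / 2) * frobNorm (g (Z ω) - g x) ^ 2 := by
      have := frobNorm_nonneg (g (Z ω) - g x)
      nlinarith
    have hZx : Z ω - x = u := rfl
    rw [hZx] at hm
    have hsplit : (inner ℝ u (f (Z ω)) : ℝ) = inner ℝ u (f (Z ω) - f x) + inner ℝ u (f x) := by
      rw [← inner_add_right]; congr 1; abel
    have hmono' : (inner ℝ u (f (Z ω)) : ℝ) ≤ inner ℝ u (f x) := by
      have h1 : (inner ℝ u (f (Z ω) - f x) : ℝ) ≤ 0 := by nlinarith [sq_nonneg ‖u‖]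
      linarith [hsplit.le, hsplit.ge]
    have hCS1 : (inner ℝ u (f x) : ℝ) ≤ ‖u‖ * F := by
      rw [hF_def]; exact real_inner_le_norm u (f x)
    have hCS2 : (inner ℝ u v : ℝ) ≤ ‖u‖ * ‖v‖ := real_inner_le_norm u v
    have hkey : ‖u‖ ^ 2 ≤ ‖u‖ * (h * F + G * N ω) := by
      rw [← real_inner_self_eq_norm_sq]
      calc (inner ℝ u u : ℝ) = h * inner ℝ u (f (Z ω)) + inner ℝ u v := hinner
        _ ≤ h * (‖u‖ * F) + ‖u‖ * ‖v‖ := by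
            have : h * inner ℝ u (f (Z ω)) ≤ h * (‖u‖ * F) := by
              apply mul_le_mul_of_nonneg_left _ hh.le
              exact hmono'.trans hCS1
            linarith
        _ ≤ ‖u‖ * (h * F + G * N ω) := by
            have h2 : ‖u‖ * ‖v‖ ≤ ‖u‖ * (G * N ω) :=
              mul_le_mul_of_nonneg_left hvle (norm_nonneg u)
            nlinarith [norm_nonneg u]
    rcases eq_or_lt_of_le (norm_nonneg u) with h0 | h0
    · rw [← h0]
      have := hN0 ω
      positivity
    · have := hkey
      rw [sq] at this
      exact le_of_mul_le_mul_left (by linarith) h0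
  -- coordinates
  set Xc : Fin m → Ω → ℝ := fun i ω => W (t+h) ω i - W t ω i with hXc_def
  have hNsq : ∀ ω, N ω ^ 2 = ∑ i, (Xc i ω) ^ 2 := by
    intro ω
    rw [hN_def]
    simp only [EuclideanSpace.norm_eq]
    rw [Real.sq_sqrt (by positivity)]
    apply Finset.sum_congr rfl
    intro i _
    rw [Real.norm_eq_abs, sq_abs]
    congr 1
  have hmap : ∀ i, Measure.map (Xc i) μ = gaussianReal 0 (h.toNNReal) := by
    intro i
    have := hW.2.2.1 t (t+h) ht (by linarith) i
    rwa [add_sub_cancel_left] at this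
  have hXm : ∀ i, AEMeasurable (Xc i) μ := by
    intro i
    exact aemeasurable_of_map_neZero (by rw [hmap i]; infer_instance)
  have hint : ∀ i, Integrable (fun ω => (Xc i ω) ^ (2*n)) μ := by
    intro i
    have h1 := integrable_pow_gaussian n h.toNNReal
    rw [← hmap i] at h1
    exact (integrable_map_measure ((measurable_id'.pow_const (2*n)).aestronglyMeasurable)
      (hXm i)).mp h1
  have hival : ∀ i, ∫ ω, (Xc i ω) ^ (2*n) ∂μ = h ^ n * M₁ := by
    intro i
    have h1 := integral_map (hXm i)
      ((measurable_id'.pow_const (2*n)).aestronglyMeasurable (μ := Measure.map (Xc i) μ))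
    rw [hmap i] at h1
    rw [← h1, integral_pow_gaussian, Real.coe_toNNReal _ hh.le, hM₁_def]
  -- majorant
  set Ca : ℝ := 2 ^ (2*p) * ((h*F) ^ (2*p) + G ^ (2*p) * h ^ p) with hCa_def
  set Cb : ℝ := 2 ^ (2*p) * G ^ (2*p) * h ^ (p - (n:ℝ)) * (m:ℝ) ^ (n-1) with hCb_def
  have hG2p0 : 0 ≤ G ^ (2*p) := Real.rpow_nonneg hG0 _
  have hCb0 : 0 ≤ Cb := by
    have h1 : (0:ℝ) ≤ 2 ^ (2*p) := (Real.rpow_pos_of_pos two_pos _).le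
    have h2 : (0:ℝ) ≤ h ^ (p - (n:ℝ)) := (Real.rpow_pos_of_pos hh _).le
    positivity
  have hptw : ∀ ω, ‖Z ω - x‖ ^ (2*p) ≤ Ca + Cb * ∑ i, (Xc i ω) ^ (2*n) := by
    intro ω
    have h2p0 : (0:ℝ) ≤ 2*p := by linarith
    have hbase : 0 ≤ h * F + G * N ω := by
      have := hN0 ω; positivity
    have hNp : (N ω) ^ (2*p) ≤ h ^ p + h ^ (p - (n:ℝ)) * ((m:ℝ) ^ (n-1) * ∑ i, (Xc i ω) ^ (2*n)) := by
      have hstep1 : (N ω) ^ (2*p) = (∑ i, (Xc i ω) ^ 2) ^ p := by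
        rw [← hNsq ω, ← Real.rpow_natCast (N ω) 2, ← Real.rpow_mul (hN0 ω)]
        norm_num
      have hS0 : (0:ℝ) ≤ ∑ i, (Xc i ω) ^ 2 := by positivity
      have hstep2 := rpow_le_split (a := ∑ i, (Xc i ω) ^ 2) (h := h) (n := n)
        hS0 hh hp0.le hpn
      have hstep3 : (∑ i, (Xc i ω) ^ 2) ^ n ≤ (m:ℝ) ^ (n-1) * ∑ i, (Xc i ω) ^ (2*n) := by
        have := sum_pow_le (fun i => (Xc i ω) ^ 2) (fun i => sq_nonneg _) n hn1
        simp only [Fintype.card_fin] at this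
        calc (∑ i, (Xc i ω) ^ 2) ^ n ≤ (m:ℝ) ^ (n-1) * ∑ i, ((Xc i ω) ^ 2) ^ n := this
          _ = (m:ℝ) ^ (n-1) * ∑ i, (Xc i ω) ^ (2*n) := by
              congr 1; apply Finset.sum_congr rfl; intro i _; rw [← pow_mul]
      have h4 : (0:ℝ) ≤ h ^ (p - (n:ℝ)) := (Real.rpow_pos_of_pos hh _).le
      rw [hstep1]
      calc (∑ i, (Xc i ω) ^ 2) ^ p
          ≤ h ^ p + h ^ (p - (n:ℝ)) * (∑ i, (Xc i ω) ^ 2) ^ n := hstep2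
        _ ≤ h ^ p + h ^ (p - (n:ℝ)) * ((m:ℝ) ^ (n-1) * ∑ i, (Xc i ω) ^ (2*n)) := by
            have := mul_le_mul_of_nonneg_left hstep3 h4
            linarith
    calc ‖Z ω - x‖ ^ (2*p) ≤ (h * F + G * N ω) ^ (2*p) :=
          Real.rpow_le_rpow (norm_nonneg _) (hpath ω) h2p0
      _ ≤ 2 ^ (2*p) * ((h*F) ^ (2*p) + (G * N ω) ^ (2*p)) :=
          rpow_add_le (by positivity) (by have := hN0 ω; positivity) h2p0
      _ = 2 ^ (2*p) * (h*F) ^ (2*p) + 2 ^ (2*p) * (G ^ (2*p) * (N ω) ^ (2*p)) := by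
          rw [Real.mul_rpow hG0 (hN0 ω)]; ring
      _ ≤ 2 ^ (2*p) * (h*F) ^ (2*p) + 2 ^ (2*p) * (G ^ (2*p) *
            (h ^ p + h ^ (p - (n:ℝ)) * ((m:ℝ) ^ (n-1) * ∑ i, (Xc i ω) ^ (2*n)))) := by
          have h1 : (0:ℝ) ≤ 2 ^ (2*p) := (Real.rpow_pos_of_pos two_pos _).le
          have h2 := mul_le_mul_of_nonneg_left hNp hG2p0
          nlinarith
      _ = Ca + Cb * ∑ i, (Xc i ω) ^ (2*n) := by rw [hCa_def, hCb_def]; ring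
  -- integrate
  have hmaj_int : Integrable (fun ω => Ca + Cb * ∑ i, (Xc i ω) ^ (2*n)) μ :=
    (integrable_const Ca).add ((integrable_finset_sum _ (fun i _ => hint i)).const_mul Cb)
  have hIle : (∫ ω, ‖Z ω - x‖ ^ (2*p) ∂μ) ≤ Ca + Cb * ((m:ℝ) * (h ^ n * M₁)) := by
    calc (∫ ω, ‖Z ω - x‖ ^ (2*p) ∂μ)
        ≤ ∫ ω, (Ca + Cb * ∑ i, (Xc i ω) ^ (2*n)) ∂μ := by
          apply integral_mono_of_nonneg
          · exact ae_of_all _ fun ω => Real.rpow_nonneg (norm_nonneg _) _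
          · exact hmaj_int
          · exact ae_of_all _ hptw
      _ = Ca + Cb * ((m:ℝ) * (h ^ n * M₁)) := by
          rw [integral_add (integrable_const Ca)
            ((integrable_finset_sum _ (fun i _ => hint i)).const_mul Cb)]
          rw [integral_const]
          simp only [probReal_univ, smul_eq_mul, one_mul]
          rw [integral_const_mul, integral_finset_sum _ (fun i _ => hint i)]
          congr 1
          rw [Finset.sum_congr rfl (fun i _ => hival i)]
          rw [Finset.sum_const, Finset.card_univ, Fintype.card_fin, nsmul_eq_mul]
  -- final constant comparisons
  set D : ℝ := 1 + R ^ (2*κ*p) with hD_def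
  have hD0 : (0:ℝ) ≤ D := by
    have : 0 ≤ R ^ (2*κ*p) := Real.rpow_nonneg hR0 _
    linarith
  have hTp : (1 + R ^ (2*κ)) ^ p ≤ 2 ^ p * D := by
    have := rpow_add_le (a := 1) (b := R ^ (2*κ)) (q := p) zero_le_one hRκ0 hp0.le
    rw [Real.one_rpow, ← Real.rpow_mul hR0] at this
    rw [hD_def]
    convert this using 3
  have hF2p : F ^ (2*p) ≤ K₁ ^ p * (2 ^ p * D) := by
    have h1 : F ^ (2*p) = (F ^ 2) ^ p := by
      rw [← Real.rpow_natCast F 2, ← Real.rpow_mul hF0]; norm_num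
    rw [h1]
    calc (F ^ 2) ^ p ≤ (K₁ * (1 + R ^ (2*κ))) ^ p :=
          Real.rpow_le_rpow (sq_nonneg F) hF2 hp0.le
      _ = K₁ ^ p * (1 + R ^ (2*κ)) ^ p := Real.mul_rpow hK₁.le (by positivity)
      _ ≤ K₁ ^ p * (2 ^ p * D) := by
          apply mul_le_mul_of_nonneg_left hTp (Real.rpow_nonneg hK₁.le p)
  have hG2p : G ^ (2*p) ≤ K₂ ^ p * (2 ^ p * D) := by
    have h1 : G ^ (2*p) = (G ^ 2) ^ p := by
      rw [← Real.rpow_natCast G 2, ← Real.rpow_mul hG0]; norm_num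
    rw [h1]
    calc (G ^ 2) ^ p ≤ (K₂ * (1 + R ^ (2*κ))) ^ p :=
          Real.rpow_le_rpow (sq_nonneg G) hG2 hp0.le
      _ = K₂ ^ p * (1 + R ^ (2*κ)) ^ p := Real.mul_rpow hK₂.le (by positivity)
      _ ≤ K₂ ^ p * (2 ^ p * D) := by
          apply mul_le_mul_of_nonneg_left hTp (Real.rpow_nonneg hK₂.le p)
  have hhF2p : (h*F) ^ (2*p) ≤ h ^ p * F ^ (2*p) := by
    rw [Real.mul_rpow hh.le hF0]
    have h1 : h ^ (2*p) ≤ h ^ p :=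
      Real.rpow_le_rpow_of_exponent_ge hh hh1 (by linarith)
    exact mul_le_mul_of_nonneg_right h1 (Real.rpow_nonneg hF0 _)
  have hhn : h ^ (p - (n:ℝ)) * (h:ℝ) ^ n = h ^ p := by
    rw [← Real.rpow_natCast h n, ← Real.rpow_add hh]
    ring_nf
  have hmn : (m:ℝ) ^ (n-1) * (m:ℝ) = (m:ℝ) ^ n := by
    rw [← pow_succ, Nat.sub_add_cancel hn1]
  have hp_pos : (0:ℝ) ≤ h ^ p := (Real.rpow_pos_of_pos hh p).le
  have h2p_pos : (0:ℝ) ≤ (2:ℝ) ^ (2*p) := (Real.rpow_pos_of_pos two_pos _).le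
  -- assemble
  have hfinal : Ca + Cb * ((m:ℝ) * (h ^ n * M₁))
      ≤ 2 ^ (2*p) * 2 ^ p * (K₁ ^ p + K₂ ^ p * (1 + (m:ℝ) ^ n * M₁)) * D * h ^ p := by
    have e1 : Cb * ((m:ℝ) * (h ^ n * M₁)) = 2 ^ (2*p) * G ^ (2*p) * ((m:ℝ) ^ n * M₁) * h ^ p := by
      rw [hCb_def]
      have : h ^ (p - (n:ℝ)) * (m:ℝ) ^ (n-1) * ((m:ℝ) * (h ^ n * M₁))
          = (h ^ (p - (n:ℝ)) * (h:ℝ) ^ n) * ((m:ℝ) ^ (n-1) * (m:ℝ)) * M₁ := by ring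
      calc 2 ^ (2*p) * G ^ (2*p) * h ^ (p - (n:ℝ)) * (m:ℝ) ^ (n-1) * ((m:ℝ) * (h ^ n * M₁))
          = 2 ^ (2*p) * G ^ (2*p) * ((h ^ (p - (n:ℝ)) * (h:ℝ) ^ n) * ((m:ℝ) ^ (n-1) * (m:ℝ)) * M₁) := by ring
        _ = 2 ^ (2*p) * G ^ (2*p) * ((m:ℝ) ^ n * M₁) * h ^ p := by rw [hhn, hmn]; ring
    have b1 : 2 ^ (2*p) * (h*F) ^ (2*p) ≤ 2 ^ (2*p) * (K₁ ^ p * (2 ^ p * D)) * h ^ p := by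
      have := hhF2p.trans (mul_le_mul_of_nonneg_left hF2p hp_pos)
      calc 2 ^ (2*p) * (h*F) ^ (2*p) ≤ 2 ^ (2*p) * (h ^ p * (K₁ ^ p * (2 ^ p * D))) :=
            mul_le_mul_of_nonneg_left this h2p_pos
        _ = 2 ^ (2*p) * (K₁ ^ p * (2 ^ p * D)) * h ^ p := by ring
    have b2 : 2 ^ (2*p) * (G ^ (2*p) * h ^ p) ≤ 2 ^ (2*p) * (K₂ ^ p * (2 ^ p * D)) * h ^ p := by
      have := mul_le_mul_of_nonneg_right hG2p hp_pos
      calc 2 ^ (2*p) * (G ^ (2*p) * h ^ p) ≤ 2 ^ (2*p) * (K₂ ^ p * (2 ^ p * D) * h ^ p) :=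
            mul_le_mul_of_nonneg_left this h2p_pos
        _ = 2 ^ (2*p) * (K₂ ^ p * (2 ^ p * D)) * h ^ p := by ring
    have b3 : 2 ^ (2*p) * G ^ (2*p) * ((m:ℝ) ^ n * M₁) * h ^ p
        ≤ 2 ^ (2*p) * (K₂ ^ p * (2 ^ p * D)) * ((m:ℝ) ^ n * M₁) * h ^ p := by
      have h3 : (0:ℝ) ≤ (m:ℝ) ^ n * M₁ := by positivity
      have := mul_le_mul_of_nonneg_right (mul_le_mul_of_nonneg_right
        (mul_le_mul_of_nonneg_left hG2p h2p_pos) h3) hp_pos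
      calc 2 ^ (2*p) * G ^ (2*p) * ((m:ℝ) ^ n * M₁) * h ^ p
          = 2 ^ (2*p) * G ^ (2*p) * ((m:ℝ) ^ n * M₁) * h ^ p := rfl
        _ ≤ 2 ^ (2*p) * (K₂ ^ p * (2 ^ p * D)) * ((m:ℝ) ^ n * M₁) * h ^ p := this
    have expand : Ca + Cb * ((m:ℝ) * (h ^ n * M₁))
        = 2 ^ (2*p) * (h*F) ^ (2*p) + 2 ^ (2*p) * (G ^ (2*p) * h ^ p)
          + 2 ^ (2*p) * G ^ (2*p) * ((m:ℝ) ^ n * M₁) * h ^ p := by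
      rw [e1, hCa_def]; ring
    have rhs_eq : 2 ^ (2*p) * 2 ^ p * (K₁ ^ p + K₂ ^ p * (1 + (m:ℝ) ^ n * M₁)) * D * h ^ p
        = 2 ^ (2*p) * (K₁ ^ p * (2 ^ p * D)) * h ^ p
          + 2 ^ (2*p) * (K₂ ^ p * (2 ^ p * D)) * h ^ p
          + 2 ^ (2*p) * (K₂ ^ p * (2 ^ p * D)) * ((m:ℝ) ^ n * M₁) * h ^ p := by ring
    rw [expand, rhs_eq]
    linarith
  calc (∫ ω, ‖Z ω - x‖ ^ (2*p) ∂μ) ≤ Ca + Cb * ((m:ℝ) * (h ^ n * M₁)) := hIle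
    _ ≤ 2 ^ (2*p) * 2 ^ p * (K₁ ^ p + K₂ ^ p * (1 + (m:ℝ) ^ n * M₁)) * D * h ^ p := hfinal
    _ = 2 ^ (2*p) * 2 ^ p * (K₁ ^ p + K₂ ^ p * (1 + (m:ℝ) ^ n * M₁)) * (1 + R ^ (2*κ*p)) * h ^ p := by
        rw [hD_def]
end
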